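/- arXiv:1301.7156 — 2 statements merged into one kernel-verified Lean document; each statement's English description precedes it below -/
import Mathlib

section
/- Let ν be a probability measure on the circle 𝕋 admitting a continuous density with respect to λ (still denoted ν). Then the potential U₁ is twice continuously differentiable on 𝕋 and for every x ∈ 𝕋, U₁''(x) = (ν(x) − ν(x+π))/π. -/
/-!
Lifting to `ℝ`, `U₁(x) = (2π)⁻¹ ∫_{x-π}^{x+π} g(t) |x - t| dt`, since `d(x, t) = |x - t|` on
that window. Splitting at `t = x` expresses this through primitives of `g` and `t g(t)`, so it
is differentiable, and the `2π`-periodicity of `g` cancels the boundary terms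
`π (g(x+π) - g(x-π))`, leaving `U₁'(x) = (2π)⁻¹ (∫_{x-π}^x g - ∫_x^{x+π} g)`. Differentiating
once more gives `(2g(x) - g(x-π) - g(x+π)) / (2π) = (g(x) - g(x+π)) / π`.
-/

open MeasureTheory Real Set Filter

noncomputable section

instance : Fact (0 < 2 * π) := ⟨Real.two_pi_pos⟩

abbrev 𝕋 : Type := AddCircle (2 * π)

/-- The normalized Haar probability measure `λ` on the circle. -/
def lam : Measure 𝕋 := (ENNReal.ofReal (2 * π))⁻¹ • volume

theorem hasDerivAt_intervalIntegral_of_hasDerivAt {f u v : ℝ → ℝ} {u' v' x : ℝ}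
    (hf : Continuous f) (hu : HasDerivAt u u' x) (hv : HasDerivAt v v' x) :
    HasDerivAt (fun y => ∫ t in u y..v y, f t) (f (v x) * v' - f (u x) * u') x := by
  have hF (a : ℝ) : HasDerivAt (fun b => ∫ t in (0 : ℝ)..b, f t) (f a) a :=
    (hf.integral_hasStrictDerivAt 0 a).hasDerivAt
  have hsplit (y : ℝ) :
      ∫ t in u y..v y, f t = (∫ t in (0 : ℝ)..v y, f t) - ∫ t in (0 : ℝ)..u y, f t :=
    (intervalIntegral.integral_interval_sub_left (hf.intervalIntegrable _ _)
      (hf.intervalIntegrable _ _)).symm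
  simp only [hsplit]
  exact ((hF (v x)).comp x hv).sub ((hF (u x)).comp x hu)

def leftMinusRightIntegral (f : ℝ → ℝ) (c x : ℝ) : ℝ :=
  (∫ t in (x - c)..x, f t) - ∫ t in x..(x + c), f t

section

variable {f : ℝ → ℝ} {c : ℝ}

theorem hasDerivAt_leftMinusRightIntegral (hf : Continuous f) (x : ℝ) :
    HasDerivAt (leftMinusRightIntegral f c) (2 * f x - f (x - c) - f (x + c)) x := by
  have hid := hasDerivAt_id' x
  refine ((hasDerivAt_intervalIntegral_of_hasDerivAt hf (hid.sub_const c) hid).sub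
    (hasDerivAt_intervalIntegral_of_hasDerivAt hf hid (hid.add_const c))).congr_deriv ?_
  ring

theorem integral_mul_abs_sub_eq (hf : Continuous f) (hc : 0 ≤ c) (x : ℝ) :
    ∫ t in (x - c)..(x + c), f t * |x - t| =
      x * leftMinusRightIntegral f c x - leftMinusRightIntegral (fun t => t * f t) c x := by
  have hint {g : ℝ → ℝ} (hg : Continuous g) (a b : ℝ) : IntervalIntegrable g volume a b :=
    hg.intervalIntegrable a b
  have hxf : Continuous fun t => x * f t := continuous_const.mul hf
  have htf : Continuous fun t => t * f t := continuous_id.mul hf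
  have hleft : ∫ t in (x - c)..x, f t * |x - t| = ∫ t in (x - c)..x, (x * f t - t * f t) := by
    refine intervalIntegral.integral_congr fun t ht => ?_
    rw [uIcc_of_le (by linarith)] at ht
    rw [abs_of_nonneg (by linarith [ht.2])]
    ring
  have hright : ∫ t in x..(x + c), f t * |x - t| = -∫ t in x..(x + c), (x * f t - t * f t) := by
    rw [← intervalIntegral.integral_neg]
    refine intervalIntegral.integral_congr fun t ht => ?_
    rw [uIcc_of_le (by linarith)] at ht
    rw [abs_of_nonpos (by linarith [ht.1])]
    ring
  have hkernel : Continuous fun t => f t * |x - t| := by fun_prop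
  rw [← intervalIntegral.integral_add_adjacent_intervals (b := x) (hint hkernel _ _)
      (hint hkernel _ _), hleft, hright,
    intervalIntegral.integral_sub (hint hxf _ _) (hint htf _ _),
    intervalIntegral.integral_sub (hint hxf _ _) (hint htf _ _),
    intervalIntegral.integral_const_mul, intervalIntegral.integral_const_mul,
    leftMinusRightIntegral, leftMinusRightIntegral]
  ring

theorem hasDerivAt_mul_leftMinusRightIntegral_sub (hf : Continuous f)
    (hper : Function.Periodic f (2 * c)) (x : ℝ) :
    HasDerivAt (fun y => y * leftMinusRightIntegral f c y -
        leftMinusRightIntegral (fun t => t * f t) c y)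
      (leftMinusRightIntegral f c x) x := by
  refine (((hasDerivAt_id' x).mul (hasDerivAt_leftMinusRightIntegral hf x)).sub
    (hasDerivAt_leftMinusRightIntegral (f := fun t => t * f t) (continuous_id'.mul hf) x)
    ).congr_deriv ?_
  have hfc : f (x + c) = f (x - c) := by
    rw [← hper (x - c)]
    ring_nf
  rw [hfc]
  ring

end

theorem integral_withDensity_ofReal {X : Type*} [MeasurableSpace X] {μ : Measure X}
    {g : X → ℝ} (hg : Measurable g) (hg_nonneg : ∀ x, 0 ≤ g x) (f : X → ℝ) :
    ∫ x, f x ∂μ.withDensity (fun x => ENNReal.ofReal (g x)) = ∫ x, g x * f x ∂μ := by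
  rw [integral_withDensity_eq_integral_toReal_smul hg.ennreal_ofReal
    (ae_of_all _ fun _ => ENNReal.ofReal_lt_top)]
  simp only [ENNReal.toReal_ofReal (hg_nonneg _), smul_eq_mul]

theorem AddCircle.dist_coe_eq_abs_sub {p : ℝ} [Fact (0 < p)] {x t : ℝ} (h : |x - t| ≤ p / 2) :
    dist (x : AddCircle p) (t : AddCircle p) = |x - t| := by
  have hp := (Fact.out : 0 < p)
  rw [dist_eq_norm, ← AddCircle.coe_sub]
  exact (AddCircle.norm_coe_eq_abs_iff p hp.ne').2 (by rwa [abs_of_pos hp])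

theorem integral_lam (f : 𝕋 → ℝ) (a : ℝ) :
    ∫ y, f y ∂lam = (2 * π)⁻¹ * ∫ t in a..a + 2 * π, f t := by
  rw [lam, integral_smul_measure, AddCircle.intervalIntegral_preimage, ENNReal.toReal_inv,
    ENNReal.toReal_ofReal two_pi_pos.le, smul_eq_mul]

theorem integral_dist_withDensity_lam {g : 𝕋 → ℝ} (hg : Continuous g) (hg_nonneg : ∀ x, 0 ≤ g x)
    (x : ℝ) :
    ∫ y, dist (x : 𝕋) y ∂lam.withDensity (fun y => ENNReal.ofReal (g y)) =
      (2 * π)⁻¹ * ∫ t in (x - π)..(x + π), g t * |x - t| := by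
  rw [integral_withDensity_ofReal hg.measurable hg_nonneg, integral_lam _ (x - π),
    show x - π + 2 * π = x + π by ring]
  congr 1
  refine intervalIntegral.integral_congr fun t ht => ?_
  rw [uIcc_of_le (by linarith [pi_pos])] at ht
  rw [AddCircle.dist_coe_eq_abs_sub (abs_le.2 ⟨by linarith [ht.2], by linarith [ht.1]⟩)]

theorem contDiff_two_of_hasDerivAt {f f' f'' : ℝ → ℝ} (hf : ∀ x, HasDerivAt f (f' x) x)
    (hf' : ∀ x, HasDerivAt f' (f'' x) x) (hf'' : Continuous f'') : ContDiff ℝ 2 f := by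
  have hderiv : deriv f = f' := funext fun x => (hf x).deriv
  have hderiv' : deriv f' = f'' := funext fun x => (hf' x).deriv
  refine (contDiff_succ_iff_deriv (n := 1)).2 ⟨fun x => (hf x).differentiableAt, by simp, ?_⟩
  rw [hderiv]
  exact contDiff_one_iff_deriv.2 ⟨fun x => (hf' x).differentiableAt, hderiv' ▸ hf''⟩

theorem U1_second_derivative_general
    (g : 𝕋 → ℝ) (hg_cont : Continuous g) (hg_nonneg : ∀ x, 0 ≤ g x)
    (ν : Measure 𝕋)
    (hν : ν = lam.withDensity fun y => ENNReal.ofReal (g y))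
    (U1 : ℝ → ℝ)
    (hU1 : ∀ x : ℝ, U1 x = ∫ y, dist ((x : 𝕋)) y ∂ν) :
    ContDiff ℝ 2 U1 ∧
      ∀ x : ℝ,
        deriv (deriv U1) x = (g ((x : 𝕋)) - g ((x : 𝕋) + ((π : ℝ) : 𝕋))) / π := by
  set G : ℝ → ℝ := fun t => g t
  have hG : Continuous G := hg_cont.comp (AddCircle.continuous_mk' _)
  have hper : Function.Periodic G (2 * π) := fun t => by simp only [G, AddCircle.coe_add_period]
  have hU : U1 = fun x => (2 * π)⁻¹ * (x * leftMinusRightIntegral G π x -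
      leftMinusRightIntegral (fun t => t * G t) π x) := funext fun x => by
    rw [hU1, hν, integral_dist_withDensity_lam hg_cont hg_nonneg,
      integral_mul_abs_sub_eq hG pi_pos.le]
  have hU' (x : ℝ) : HasDerivAt U1 ((2 * π)⁻¹ * leftMinusRightIntegral G π x) x :=
    hU ▸ (hasDerivAt_mul_leftMinusRightIntegral_sub hG hper x).const_mul _
  have hU'' (x : ℝ) : HasDerivAt (fun y => (2 * π)⁻¹ * leftMinusRightIntegral G π y)
      ((G x - G (x + π)) / π) x := by
    refine ((hasDerivAt_leftMinusRightIntegral hG x).const_mul _).congr_deriv ?_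
    rw [← hper (x - π), show x - π + 2 * π = x + π by ring]
    field_simp
    ring
  refine ⟨contDiff_two_of_hasDerivAt hU' hU'' (by fun_prop), fun x => ?_⟩
  rw [funext fun y => (hU' y).deriv, (hU'' x).deriv]
  simp only [G, AddCircle.coe_add]

/-- if `ν` has a continuous density `g` w.r.t. `λ`, then the potential
`U₁(x) = ∫ d(x,y) ν(dy)` (viewed as a `2π`-periodic function on `ℝ`) is `C²` and
`U₁''(x) = (g(x) - g(x+π))/π`. -/
theorem U1_second_derivative
    (g : 𝕋 → ℝ) (hg_cont : Continuous g) (hg_nonneg : ∀ x, 0 ≤ g x)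
    (ν : Measure 𝕋) [IsProbabilityMeasure ν]
    (hν : ν = lam.withDensity fun y => ENNReal.ofReal (g y))
    (U1 : ℝ → ℝ)
    (hU1 : ∀ x : ℝ, U1 x = ∫ y, dist ((x : 𝕋)) y ∂ν) :
    ContDiff ℝ 2 U1 ∧
      ∀ x : ℝ,
        deriv (deriv U1) x = (g ((x : 𝕋)) - g ((x : 𝕋) + ((π : ℝ) : 𝕋))) / π :=
  U1_second_derivative_general g hg_cont hg_nonneg ν hν U1 hU1
end
end

section
/- Let ν be a probability measure on the circle 𝕋 admitting a continuous density with respect to λ. Then U₁ is differentiable on 𝕋 and for every x ∈ 𝕋, U₁'(x) = ν({y ∈ 𝕋 : ⟨y−x⟩ ∈ (−π,0)}) − ν({y ∈ 𝕋 : ⟨y−x⟩ ∈ (0,π)}), i.e. U₁'(x) equals the ν-measure of the open half-circle (x−π, x) minus the ν-measure of the open half-circle (x, x+π). -/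
/-!
For fixed `y`, the map `h ↦ d(h, y)` on `ℝ` is `1`-Lipschitz, and away from `h = y` and the
antipode `h = y + π` it is locally affine with slope `-sign ⟨y - h⟩`. A measure without atoms does
not see these two points, so differentiating under the integral sign gives
`U₁'(x) = -∫ sign ⟨y - x⟩ ν(dy)`, which is the difference of the measures of the two half-circles.
-/

open MeasureTheory Real Set Filter

noncomputable section

/-- The representative `⟨z⟩ ∈ (-π, π]` of `z`. -/
def rep (z : 𝕋) : ℝ := ((AddCircle.equivIoc (2 * π) (-π) z : Set.Ioc (-π) (-π + 2 * π)) : ℝ)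

open Topology

lemma AddCircle.lipschitzWith_coe (p : ℝ) : LipschitzWith 1 ((↑) : ℝ → AddCircle p) :=
  LipschitzWith.of_dist_le_mul fun a b => by
    rw [NNReal.coe_one, one_mul, dist_eq_norm, dist_eq_norm, ← AddCircle.coe_sub]
    exact QuotientAddGroup.norm_mk_le_norm

-- Makes the Haar measure on `𝕋` atomless (`IsAddHaarMeasure.nullSingletonClass`).
instance : Nontrivial 𝕋 :=
  ⟨⟨(π : ℝ), 0, fun h => by
    have := AddCircle.norm_half_period_eq (2 * π)
    rw [show 2 * π / 2 = π by ring, h, norm_zero, abs_of_pos two_pi_pos] at this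
    linarith [pi_pos]⟩⟩

instance : NullSingletonClass lam := ⟨fun x => by simp [lam]⟩

lemma rep_mem_Ioc (z : 𝕋) : rep z ∈ Ioc (-π) π := by
  have h := (AddCircle.equivIoc (2 * π) (-π) z).2
  exact ⟨h.1, h.2.trans_eq (by ring)⟩

lemma coe_rep (z : 𝕋) : ((rep z : ℝ) : 𝕋) = z :=
  (AddCircle.equivIoc (2 * π) (-π)).symm_apply_apply z

lemma measurable_rep : Measurable rep :=
  measurable_subtype_coe.comp (AddCircle.measurableEquivIoc (2 * π) (-π)).measurable

lemma dist_le_pi (a b : 𝕋) : dist a b ≤ π := by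
  simpa [dist_eq_norm, abs_of_pos two_pi_pos] using
    AddCircle.norm_le_half_period (2 * π) two_pi_pos.ne' (x := a - b)

lemma dist_coe_eventuallyEq {x : ℝ} {y : 𝕋} (hy : |rep (y - x)| < π) :
    (fun h : ℝ => dist (h : 𝕋) y) =ᶠ[𝓝 x] fun h => |rep (y - x) - (h - x)| := by
  set r := rep (y - x)
  have hnear : ∀ᶠ h in 𝓝 x, |r - (h - x)| < π :=
    (show Continuous fun h : ℝ => |r - (h - x)| by fun_prop).continuousAt.eventually_lt
      continuousAt_const (by simpa using hy)
  filter_upwards [hnear] with h hh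
  have hcoe : y - (h : 𝕋) = ((r - (h - x) : ℝ) : 𝕋) := by
    rw [AddCircle.coe_sub, AddCircle.coe_sub, coe_rep]; abel
  rw [dist_comm, dist_eq_norm, hcoe,
    (AddCircle.norm_coe_eq_abs_iff _ two_pi_pos.ne').2 (by rw [abs_of_pos two_pi_pos]; linarith)]

lemma hasDerivAt_dist_coe {x : ℝ} {y : 𝕋} (h0 : rep (y - x) ≠ 0) (hπ : rep (y - x) ≠ π) :
    HasDerivAt (fun h : ℝ => dist (h : 𝕋) y) (-SignType.sign (rep (y - x)) : ℝ) x := by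
  have hlt : |rep (y - x)| < π :=
    abs_lt.2 ⟨(rep_mem_Ioc _).1, (rep_mem_Ioc _).2.lt_of_ne hπ⟩
  have hlift : HasDerivAt (fun h : ℝ => rep (y - x) - (h - x)) (-1) x := by
    simpa using ((hasDerivAt_id x).sub_const x).const_sub (rep (y - x))
  have := (hasDerivAt_abs h0).comp_of_eq x hlift (by ring)
  simpa using this.congr_of_eventuallyEq (dist_coe_eventuallyEq hlt)

/-- `leftHalf x` and `rightHalf x` are the open half-circles `(x - π, x)` and `(x, x + π)`. -/
def leftHalf (x : 𝕋) : Set 𝕋 := {y | rep (y - x) ∈ Ioo (-π) 0}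

def rightHalf (x : 𝕋) : Set 𝕋 := {y | rep (y - x) ∈ Ioo 0 π}

lemma indicator_leftHalf_sub_indicator_rightHalf {x y : 𝕋} (hπ : rep (y - x) ≠ π) :
    (leftHalf x).indicator 1 y - (rightHalf x).indicator (1 : 𝕋 → ℝ) y
      = -SignType.sign (rep (y - x)) := by
  have hmem := rep_mem_Ioc (y - x)
  rcases lt_trichotomy (rep (y - x)) 0 with h | h | h
  · simp [leftHalf, rightHalf, indicator, h, hmem.1, h.not_gt]
  · simp [leftHalf, rightHalf, indicator, h]
  · simp [leftHalf, rightHalf, indicator, h, h.le, hmem.2.lt_of_ne hπ]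

lemma measurableSet_leftHalf (x : 𝕋) : MeasurableSet (leftHalf x) :=
  (measurable_rep.comp (measurable_id.sub_const x)) measurableSet_Ioo

lemma measurableSet_rightHalf (x : 𝕋) : MeasurableSet (rightHalf x) :=
  (measurable_rep.comp (measurable_id.sub_const x)) measurableSet_Ioo

lemma ae_rep_sub_ne (ν : Measure 𝕋) [NullSingletonClass ν] (x : 𝕋) :
    ∀ᵐ y ∂ν, rep (y - x) ≠ 0 ∧ rep (y - x) ≠ π := by
  filter_upwards [ν.ae_ne x, ν.ae_ne (x + (π : ℝ))] with y hx hxπ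
  have hy : y = x + (rep (y - x) : ℝ) := by rw [coe_rep]; abel
  exact ⟨fun h => hx (by rwa [h, AddCircle.coe_zero, add_zero] at hy),
    fun h => hxπ (by rwa [h] at hy)⟩

theorem hasDerivAt_integral_dist_coe (ν : Measure 𝕋) [IsFiniteMeasure ν] [NullSingletonClass ν]
    (x : ℝ) :
    HasDerivAt (fun h : ℝ => ∫ y, dist (h : 𝕋) y ∂ν)
      (ν.real (leftHalf x) - ν.real (rightHalf x)) x := by
  have hcont (h : ℝ) : Continuous fun y : 𝕋 => dist (h : 𝕋) y := by fun_prop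
  have hderiv : ∀ᵐ y ∂ν, HasDerivAt (fun h : ℝ => dist (h : 𝕋) y)
      ((leftHalf x).indicator 1 y - (rightHalf x).indicator 1 y) x := by
    filter_upwards [ae_rep_sub_ne ν x] with y ⟨h0, hπ⟩
    rw [indicator_leftHalf_sub_indicator_rightHalf hπ]
    exact hasDerivAt_dist_coe h0 hπ
  have hlip : ∀ᵐ y ∂ν, LipschitzOnWith (Real.nnabs 1) (fun h : ℝ => dist (h : 𝕋) y) univ :=
    ae_of_all _ fun y => by
      simpa [Function.comp_def] using
        ((LipschitzWith.dist_left y).comp (AddCircle.lipschitzWith_coe _)).lipschitzOnWith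
          (s := univ)
  have hind (s : Set 𝕋) (hs : MeasurableSet s) : Integrable (s.indicator (1 : 𝕋 → ℝ)) ν :=
    (integrable_const 1).indicator hs
  have := (hasDerivAt_integral_of_dominated_loc_of_lip univ_mem
    (.of_forall fun h => (hcont h).aestronglyMeasurable) ?_ ?_ hlip (integrable_const 1) hderiv).2
  · rwa [integral_sub (hind _ (measurableSet_leftHalf x)) (hind _ (measurableSet_rightHalf x)),
      integral_indicator_one (measurableSet_leftHalf x),
      integral_indicator_one (measurableSet_rightHalf x)] at this
  · exact Integrable.of_bound (hcont x).aestronglyMeasurable π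
      (ae_of_all _ fun y => (Real.norm_of_nonneg dist_nonneg).trans_le (dist_le_pi _ _))
  · exact ((hind _ (measurableSet_leftHalf x)).sub (hind _ (measurableSet_rightHalf x))).1

theorem U1_first_derivative_general
    (g : 𝕋 → ℝ)
    (ν : Measure 𝕋) [IsProbabilityMeasure ν]
    (hν : ν = lam.withDensity fun y => ENNReal.ofReal (g y))
    (U1 : ℝ → ℝ)
    (hU1 : ∀ x : ℝ, U1 x = ∫ y, dist ((x : 𝕋)) y ∂ν) :
    ∀ x : ℝ,
      HasDerivAt U1
        ((ν {y : 𝕋 | rep (y - (x : 𝕋)) ∈ Set.Ioo (-π) 0}).toReal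
          - (ν {y : 𝕋 | rep (y - (x : 𝕋)) ∈ Set.Ioo 0 π}).toReal) x := by
  have : NullSingletonClass ν := hν ▸ inferInstance
  intro x
  rw [show U1 = _ from funext hU1]
  exact hasDerivAt_integral_dist_coe ν x

/-- if `ν` has a continuous density w.r.t. `λ`, then the potential
`U₁(x) = ∫ d(x,y) ν(dy)` (as a `2π`-periodic function on `ℝ`) is differentiable, with
`U₁'(x) = ν((x-π, x)) - ν((x, x+π))` (measures of the two open half-circles around `x`). -/
theorem U1_first_derivative
    (g : 𝕋 → ℝ) (hg_cont : Continuous g) (hg_nonneg : ∀ x, 0 ≤ g x)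
    (ν : Measure 𝕋) [IsProbabilityMeasure ν]
    (hν : ν = lam.withDensity fun y => ENNReal.ofReal (g y))
    (U1 : ℝ → ℝ)
    (hU1 : ∀ x : ℝ, U1 x = ∫ y, dist ((x : 𝕋)) y ∂ν) :
    ∀ x : ℝ,
      HasDerivAt U1
        ((ν {y : 𝕋 | rep (y - (x : 𝕋)) ∈ Set.Ioo (-π) 0}).toReal
          - (ν {y : 𝕋 | rep (y - (x : 𝕋)) ∈ Set.Ioo 0 π}).toReal) x :=
  U1_first_derivative_general g ν hν U1 hU1
end
end
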